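/- For α > 0, β > 0, λ ∈ ℝ and s > |λ|^{1/α}, the Laplace transform of t^{β-1} E_{α,β}(λ t^α) equals s^{α-β}/(s^α − λ). -/

import Mathlib

open MeasureTheory Real

/-- Two-parameter Mittag-Leffler function E_{α,β}(z) = Σ_{k=0}^∞ z^k / Γ(αk + β). -/
noncomputable def mittagLeffler (α β z : ℝ) : ℝ :=
  ∑' k : ℕ, z ^ k / Real.Gamma (α * k + β)

/-!
Expanding `t^(β-1) E_{α,β}(λ t^α) = Σ_k λ^k t^(αk+β-1) / Γ(αk+β)`, each term has Laplace transform
`λ^k s^(-αk-β)`, so the transform is the geometric series `s^(-β) Σ_k (λ s^(-α))^k`, which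
converges exactly when `|λ| < s^α`. Its absolute series is the same geometric series with `|λ|`,
which justifies exchanging sum and integral.
-/

lemma integrableOn_rpow_sub_one_mul_exp_neg_mul {γ s : ℝ} (hγ : 0 < γ) (hs : 0 < s) :
    IntegrableOn (fun t : ℝ => t ^ (γ - 1) * exp (-(s * t))) (Set.Ioi 0) := by
  refine (integrableOn_rpow_mul_exp_neg_mul_rpow (s := γ - 1) (by linarith) one_pos hs).congr_fun
    (fun t _ => ?_) measurableSet_Ioi
  simp only [rpow_one, neg_mul]

theorem integral_exp_neg_mul_mul_tsum_rpow_Ioi {c γ : ℕ → ℝ} {s : ℝ} (hs : 0 < s)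
    (hγ : ∀ k, 0 < γ k) (hsum : Summable fun k => |c k| * ((1 / s) ^ γ k * Gamma (γ k))) :
    ∫ t in Set.Ioi 0, exp (-s * t) * ∑' k, c k * t ^ (γ k - 1) =
      ∑' k, c k * ((1 / s) ^ γ k * Gamma (γ k)) := by
  have hnorm : ∀ k, ∫ t in Set.Ioi 0, ‖c k * (t ^ (γ k - 1) * exp (-(s * t)))‖ =
      |c k| * ((1 / s) ^ γ k * Gamma (γ k)) := by
    intro k
    rw [← integral_rpow_mul_exp_neg_mul_Ioi (hγ k) hs, ← integral_const_mul]
    refine setIntegral_congr_fun measurableSet_Ioi fun t (ht : 0 < t) => ?_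
    rw [norm_mul, Real.norm_eq_abs, Real.norm_of_nonneg (by positivity)]
  have hterms : ∀ t, exp (-s * t) * ∑' k, c k * t ^ (γ k - 1) =
      ∑' k, c k * (t ^ (γ k - 1) * exp (-(s * t))) := fun t => by
    rw [← tsum_mul_left]
    exact tsum_congr fun k => by rw [neg_mul]; ring
  simp only [hterms]
  rw [← integral_tsum_of_summable_integral_norm
    (fun k => (integrableOn_rpow_sub_one_mul_exp_neg_mul (hγ k) hs).const_mul (c k))
    (hsum.congr fun k => (hnorm k).symm)]
  simp only [integral_const_mul]
  exact tsum_congr fun k => by rw [integral_rpow_mul_exp_neg_mul_Ioi (hγ k) hs]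

lemma rpow_sub_one_mul_mittagLeffler {α β t : ℝ} (ht : 0 < t) (x : ℝ) :
    t ^ (β - 1) * mittagLeffler α β (x * t ^ α) =
      ∑' k : ℕ, x ^ k / Gamma (α * k + β) * t ^ (α * k + β - 1) := by
  rw [mittagLeffler, ← tsum_mul_left]
  refine tsum_congr fun k => ?_
  rw [mul_pow, ← rpow_natCast (t ^ α), ← rpow_mul ht.le, add_sub_assoc, rpow_add ht]
  ring

lemma pow_div_Gamma_mul_one_div_rpow_mul_Gamma {α β s : ℝ} (hs : 0 < s) (x : ℝ) (k : ℕ)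
    (hΓ : Gamma (α * k + β) ≠ 0) :
    x ^ k / Gamma (α * k + β) * ((1 / s) ^ (α * k + β) * Gamma (α * k + β)) =
      (x * (1 / s) ^ α) ^ k * (1 / s) ^ β := by
  rw [rpow_add (by positivity), rpow_mul (by positivity), rpow_natCast]
  field_simp
  ring

lemma hasSum_mul_one_div_rpow_pow {α β s x : ℝ} (hs : 0 < s) (hx : |x| < s ^ α) :
    HasSum (fun k : ℕ => (x * (1 / s) ^ α) ^ k * (1 / s) ^ β) (s ^ (α - β) / (s ^ α - x)) := by
  have hsα : 0 < s ^ α := rpow_pos_of_pos hs α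
  have hq : (1 / s) ^ α = (s ^ α)⁻¹ := by rw [one_div, inv_rpow hs.le]
  have hratio : |x * (1 / s) ^ α| < 1 := by
    rw [hq, abs_mul, abs_inv, abs_of_pos hsα, mul_inv_lt_iff₀ hsα, one_mul]
    exact hx
  have hne : s ^ α - x ≠ 0 := by linarith [le_abs_self x]
  have hlimit : s ^ (α - β) / (s ^ α - x) = (1 - x * (1 / s) ^ α)⁻¹ * (1 / s) ^ β := by
    rw [hq, one_div, inv_rpow hs.le, rpow_sub hs]
    field_simp
  rw [hlimit]
  exact (hasSum_geometric_of_abs_lt_one hratio).mul_right _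

theorem laplace_of_mittag_leffler (α β lam : ℝ) (hα : 0 < α) (hβ : 0 < β) :
    ∀ s : ℝ, |lam| ^ (1 / α) < s →
      (∫ t in Set.Ioi (0:ℝ),
          Real.exp (-s * t) * (t ^ (β - 1) * mittagLeffler α β (lam * t ^ α))) =
        s ^ (α - β) / (s ^ α - lam) := by
  intro s hlt
  have hs : 0 < s := (rpow_nonneg (abs_nonneg lam) _).trans_lt hlt
  have hlam : |lam| < s ^ α := by
    rwa [one_div, rpow_inv_lt_iff_of_pos (abs_nonneg lam) hs.le hα] at hlt
  have hγ : ∀ k : ℕ, 0 < α * k + β := fun k => by positivity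
  have hΓ : ∀ k : ℕ, 0 < Gamma (α * k + β) := fun k => Gamma_pos_of_pos (hγ k)
  have hsum : Summable fun k : ℕ =>
      |lam ^ k / Gamma (α * k + β)| * ((1 / s) ^ (α * k + β) * Gamma (α * k + β)) := by
    refine (hasSum_mul_one_div_rpow_pow (β := β) hs ((abs_abs lam).trans_lt hlam)).summable.congr
      fun k => ?_
    rw [abs_div, abs_pow, abs_of_pos (hΓ k),
      pow_div_Gamma_mul_one_div_rpow_mul_Gamma hs _ k (hΓ k).ne']
  calc (∫ t in Set.Ioi (0:ℝ), exp (-s * t) * (t ^ (β - 1) * mittagLeffler α β (lam * t ^ α)))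
      = ∫ t in Set.Ioi (0:ℝ),
          exp (-s * t) * ∑' k : ℕ, lam ^ k / Gamma (α * k + β) * t ^ (α * k + β - 1) :=
        setIntegral_congr_fun measurableSet_Ioi fun t ht => by
          rw [rpow_sub_one_mul_mittagLeffler ht]
    _ = ∑' k : ℕ, lam ^ k / Gamma (α * k + β) * ((1 / s) ^ (α * k + β) * Gamma (α * k + β)) :=
        integral_exp_neg_mul_mul_tsum_rpow_Ioi hs hγ hsum
    _ = s ^ (α - β) / (s ^ α - lam) := by
        simp_rw [fun k : ℕ => pow_div_Gamma_mul_one_div_rpow_mul_Gamma hs lam k (hΓ k).ne']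
        exact (hasSum_mul_one_div_rpow_pow hs hlam).tsum_eq
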